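/- Let 𝒞 be admissible and contravariantly finite in 𝒜. Every short Hom_𝒜(𝒞,−)-exact exact sequence 0 → L → M → N → 0 in 𝒜 induces, for each object of 𝒜 as second argument, a long exact sequence 0 → Hom(N,−) → Hom(M,−) → Hom(L,−) → Ext¹_𝒞(N,−) → ⋯ → Ext^n_𝒞(N,−) → Ext^n_𝒞(M,−) → Ext^n_𝒞(L,−) → Ext^{n+1}_𝒞(N,−) → ⋯ of relative Ext functors. -/

import Mathlib

open CategoryTheory Limits

universe v u

variable {A : Type u} [Category.{v} A] [Abelian A]

/-- A complex `X` is `𝒞`-acyclic if `Hom_𝒜(C, X)` is an acyclic complex of abelian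
groups for every `C ∈ 𝒞`. -/
def CAcyclic (𝒞 : Set A) (X : CochainComplex A ℤ) : Prop :=
  ∀ C ∈ 𝒞, ∀ i : ℤ,
    (((preadditiveCoyoneda.obj (Opposite.op C)).mapHomologicalComplex
      (ComplexShape.up ℤ)).obj X).ExactAt i

/-- A chain map `f` is a `𝒞`-quasi-isomorphism if `Hom_𝒜(C, f)` is a quasi-isomorphism
for every `C ∈ 𝒞`. -/
def CQuasiIso (𝒞 : Set A) {X Y : CochainComplex A ℤ} (f : X ⟶ Y) : Prop :=
  ∀ C ∈ 𝒞, QuasiIso (((preadditiveCoyoneda.obj (Opposite.op C)).mapHomologicalComplex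
      (ComplexShape.up ℤ)).map f)

/-- A cochain complex is bounded above. -/
def BoundedAbove (X : CochainComplex A ℤ) : Prop :=
  ∃ n : ℤ, ∀ i : ℤ, n < i → IsZero (X.X i)

/-- `f : C ⟶ M` is a right `𝒞`-approximation of `M`. -/
def IsRightApprox (𝒞 : Set A) {C M : A} (f : C ⟶ M) : Prop :=
  C ∈ 𝒞 ∧ ∀ C' ∈ 𝒞, ∀ g : C' ⟶ M, ∃ h : C' ⟶ C, h ≫ f = g

/-- `𝒞` is contravariantly finite in `𝒜`: every object has a right `𝒞`-approximation. -/
def ContravariantlyFinite (𝒞 : Set A) : Prop :=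
  ∀ M : A, ∃ (C : A) (f : C ⟶ M), IsRightApprox 𝒞 f

/-- `𝒞` is admissible: every right `𝒞`-approximation is an epimorphism. -/
def Admissible (𝒞 : Set A) : Prop :=
  ∀ ⦃C M : A⦄ (f : C ⟶ M), IsRightApprox 𝒞 f → Epi f

/-- `(P, π)` is a left `𝒞`-resolution of `M`: a `Hom_𝒜(𝒞,-)`-exact augmented complex
`⋯ → P⁻¹ → P⁰ → M → 0` with all terms in `𝒞` (indexed cohomologically, concentrated
in degrees `≤ 0`). -/
def IsLeftRes (𝒞 : Set A) (M : A) (P : CochainComplex A ℤ) (π : P.X 0 ⟶ M) : Prop :=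
  (∀ i : ℤ, 0 < i → IsZero (P.X i)) ∧
  (∀ i : ℤ, i ≤ 0 → P.X i ∈ 𝒞) ∧
  P.d (-1) 0 ≫ π = 0 ∧
  ∀ C ∈ 𝒞,
    (∀ g : C ⟶ M, ∃ h : C ⟶ P.X 0, h ≫ π = g) ∧
    (∀ g : C ⟶ P.X 0, g ≫ π = 0 → ∃ h : C ⟶ P.X (-1), h ≫ P.d (-1) 0 = g) ∧
    (∀ i : ℤ, i < 0 → ∀ g : C ⟶ P.X i, g ≫ P.d i (i + 1) = 0 →
      ∃ h : C ⟶ P.X (i - 1), h ≫ P.d (i - 1) i = g)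

/-- Vanishing of `Ext^n_𝒞(M, N) = Hⁿ Hom_𝒜(P, N)` computed from a left `𝒞`-resolution
`P` of `M`: every `n`-cocycle of `Hom_𝒜(P, N)` is a coboundary. -/
def ExtVanish (P : CochainComplex A ℤ) (N : A) (n : ℤ) : Prop :=
  ∀ g : P.X (-n) ⟶ N, P.d (-n - 1) (-n) ≫ g = 0 →
    ∃ h : P.X (-n + 1) ⟶ N, P.d (-n) (-n + 1) ≫ h = g

/-- `𝒞` is closed under direct summands (hence under isomorphisms). -/
def SummandClosed (𝒞 : Set A) : Prop :=
  ∀ (X Y : A) (ι : Y ⟶ X) (r : X ⟶ Y), ι ≫ r = 𝟙 Y → X ∈ 𝒞 → Y ∈ 𝒞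

/-- Precomposition with `f` as a homomorphism of abelian groups of morphisms. -/
def preComp {X Y : A} (Z : A) (f : X ⟶ Y) : (Y ⟶ Z) →+ (X ⟶ Z) :=
  AddMonoidHom.mk' (fun g => f ≫ g) (fun a b => Preadditive.comp_add _ _ _ _ _ _)

@[simp] lemma preComp_apply {X Y Z : A} (f : X ⟶ Y) (g : Y ⟶ Z) :
    preComp Z f g = f ≫ g := rfl

/-- The `n`-cocycles of the complex `Hom_𝒜(P, Y)`. -/
def extCocycles (P : CochainComplex A ℤ) (Y : A) (n : ℤ) :
    AddSubgroup (P.X (-n) ⟶ Y) :=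
  (preComp Y (P.d (-n - 1) (-n))).ker

/-- The `n`-coboundaries of the complex `Hom_𝒜(P, Y)`. -/
def extBoundaries (P : CochainComplex A ℤ) (Y : A) (n : ℤ) :
    AddSubgroup (P.X (-n) ⟶ Y) :=
  (preComp Y (P.d (-n) (-n + 1)) : (P.X (-n + 1) ⟶ Y) →+ (P.X (-n) ⟶ Y)).range

/-- The relative Ext group `Ext^n_𝒞(M, Y)` computed from a left `𝒞`-resolution `P`
of `M`: cocycles modulo coboundaries of `Hom_𝒜(P, Y)`. -/
def ExtGrp (P : CochainComplex A ℤ) (Y : A) (n : ℤ) : Type v :=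
  extCocycles P Y n ⧸ (extBoundaries P Y n).addSubgroupOf (extCocycles P Y n)

noncomputable instance (P : CochainComplex A ℤ) (Y : A) (n : ℤ) :
    AddCommGroup (ExtGrp P Y n) := by
  dsimp only [ExtGrp]; infer_instance

/-- The homomorphism on cocycles induced by a chain map `φ : P ⟶ P'`. -/
def extCocyclesMap {P P' : CochainComplex A ℤ} (φ : P ⟶ P') (Y : A) (n : ℤ) :
    extCocycles P' Y n →+ extCocycles P Y n :=
  AddMonoidHom.mk' (fun g => ⟨φ.f (-n) ≫ g.1, by
      have hg := g.2
      simp only [extCocycles, AddMonoidHom.mem_ker, preComp_apply] at hg ⊢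
      rw [← Category.assoc, ← HomologicalComplex.Hom.comm φ (-n-1) (-n),
        Category.assoc, hg, Limits.comp_zero]⟩)
    (fun a b => by ext; simp [Preadditive.comp_add])

/-- The homomorphism `Ext^n(M', Y) → Ext^n(M, Y)` induced by a chain map `φ : P ⟶ P'`
between left `𝒞`-resolutions. -/
def extMap {P P' : CochainComplex A ℤ} (φ : P ⟶ P') (Y : A) (n : ℤ) :
    ExtGrp P' Y n →+ ExtGrp P Y n :=
  QuotientAddGroup.map _ _ (extCocyclesMap φ Y n) (by
    rintro ⟨g, hg⟩ hmem
    simp only [AddSubgroup.mem_addSubgroupOf, extBoundaries, AddMonoidHom.mem_range,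
      preComp_apply] at hmem ⊢
    obtain ⟨h, hh⟩ := hmem
    refine ⟨φ.f (-n + 1) ≫ h, ?_⟩
    change P.d (-n) (-n+1) ≫ φ.f (-n+1) ≫ h = φ.f (-n) ≫ g
    rw [← Category.assoc, ← HomologicalComplex.Hom.comm φ (-n) (-n+1),
      Category.assoc, hh])

/-!
Horseshoe argument. Since `PN⁰ ∈ 𝒞`, the map `πN` lifts along `p` to `σ : PN⁰ ⟶ M`. The map
`-d ≫ σ : PN⁻¹ ⟶ M` factors through `L`, and lifting it through `PL` degree by degree gives maps
`Θ : PNᵏ ⟶ PLᵏ⁺¹` with `Θ d + d Θ = 0`. Twisting the differential of `PL ⊕ PN` by `Θ` gives a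
complex `Q` which, augmented by `[πL ≫ i, σ]`, is again a `Hom(𝒞, -)`-exact resolution of `M` by
sums of objects of `𝒞`; such sums are still projective for `Hom(𝒞, -)`-exactness, so the comparison
theorem makes `Q` homotopy equivalent to `PM`. The degreewise split sequence `0 → PL → Q → PN → 0`
stays exact under `Hom(-, Y)`, and its long cohomology sequence, with connecting map `Θ^*`, is the
long exact Ext sequence. In degree `0`, `Ext⁰(P, Y) = Hom(M, Y)` because `π` is a cokernel of the
last differential; this is where contravariant finiteness and admissibility are used.
-/

section DownwardRecursion

variable {T : ℤ → Type*} [∀ k, Nonempty (T k)]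

-- The values in positive degrees are arbitrary.
open Classical in
noncomputable def downwardRec (t₀ : T 0) (R : ∀ k : ℤ, T k → T (k + 1) → Prop) : ∀ k : ℤ, T k
  | k =>
    if h₀ : k = 0 then cast (congrArg T h₀.symm) t₀
    else if k < 0 then
      if h : ∃ t : T k, R k t (downwardRec t₀ R (k + 1)) then h.choose
      else Classical.arbitrary _
    else Classical.arbitrary _
  termination_by k => (-k).toNat
  decreasing_by omega

theorem exists_downward_seq (t₀ : T 0) (R : ∀ k : ℤ, T k → T (k + 1) → Prop)
    (hbase : ∃ t : T (-1), R (-1) t t₀)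
    (hstep : ∀ k < -1, ∀ (t' : T (k + 1)) (t'' : T (k + 1 + 1)),
      R (k + 1) t' t'' → ∃ t : T k, R k t t') :
    ∃ t : ∀ k, T k, t 0 = t₀ ∧ ∀ k < 0, R k (t k) (t (k + 1)) := by
  have h₀ : downwardRec t₀ R 0 = t₀ := by rw [downwardRec]; simp
  have hneg : ∀ k < 0, (∃ t : T k, R k t (downwardRec t₀ R (k + 1))) →
      R k (downwardRec t₀ R k) (downwardRec t₀ R (k + 1)) := by
    intro k hk h
    rw [downwardRec, dif_neg hk.ne, if_pos hk, dif_pos h]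
    exact h.choose_spec
  refine ⟨downwardRec t₀ R, h₀, fun k hk => ?_⟩
  obtain ⟨n, hn⟩ : ∃ n : ℕ, k = -1 - n := ⟨(-1 - k).toNat, by omega⟩
  induction n generalizing k with
  | zero =>
    obtain rfl : k = -1 := by simpa using hn
    exact hneg (-1) hk (by simpa [h₀] using hbase)
  | succ n ih =>
    exact hneg k hk (hstep k (by omega) _ _ (ih (k + 1) (by omega) (by omega)))

end DownwardRecursion

/-- `Hom(X, -)` is exact on the augmented complex `⋯ → P⁻¹ → P⁰ → M → 0`. -/
def HomExact (X : A) (P : CochainComplex A ℤ) {M : A} (π : P.X 0 ⟶ M) : Prop :=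
  (∀ g : X ⟶ M, ∃ h : X ⟶ P.X 0, h ≫ π = g) ∧
  (∀ g : X ⟶ P.X 0, g ≫ π = 0 → ∃ h : X ⟶ P.X (-1), h ≫ P.d (-1) 0 = g) ∧
  (∀ i : ℤ, i < 0 → ∀ g : X ⟶ P.X i, g ≫ P.d i (i + 1) = 0 →
    ∃ h : X ⟶ P.X (i - 1), h ≫ P.d (i - 1) i = g)

namespace HomExact

variable {X : A} {P : CochainComplex A ℤ} {M : A} {π : P.X 0 ⟶ M}

theorem exists_lift (hX : HomExact X P π) (g : X ⟶ M) : ∃ h : X ⟶ P.X 0, h ≫ π = g :=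
  hX.1 g

theorem exists_lift_of_comp_π_eq_zero (hX : HomExact X P π) {a : ℤ} (ha : a + 1 = 0)
    (g : X ⟶ P.X 0) (hg : g ≫ π = 0) : ∃ h : X ⟶ P.X a, h ≫ P.d a 0 = g := by
  obtain rfl : a = -1 := by omega
  exact hX.2.1 g hg

theorem exists_lift_of_comp_d_eq_zero (hX : HomExact X P π) {a b c : ℤ} (hab : a + 1 = b)
    (hbc : b + 1 = c) (hb : b < 0) (g : X ⟶ P.X b) (hg : g ≫ P.d b c = 0) :
    ∃ h : X ⟶ P.X a, h ≫ P.d a b = g := by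
  subst hbc
  obtain rfl : a = b - 1 := by omega
  exact hX.2.2 b hb g hg

theorem biprod {X₁ X₂ : A} (h₁ : HomExact X₁ P π) (h₂ : HomExact X₂ P π) :
    HomExact (X₁ ⊞ X₂) P π := by
  have lift {W Z V : A} (e : W ⟶ Z) (t : Z ⟶ V)
      (h₁ : ∀ g : X₁ ⟶ Z, g ≫ t = 0 → ∃ h, h ≫ e = g)
      (h₂ : ∀ g : X₂ ⟶ Z, g ≫ t = 0 → ∃ h, h ≫ e = g)
      (g : X₁ ⊞ X₂ ⟶ Z) (hg : g ≫ t = 0) : ∃ h, h ≫ e = g := by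
    obtain ⟨k₁, hk₁⟩ := h₁ (biprod.inl ≫ g) (by simp [hg])
    obtain ⟨k₂, hk₂⟩ := h₂ (biprod.inr ≫ g) (by simp [hg])
    exact ⟨biprod.desc k₁ k₂, by ext <;> simp [hk₁, hk₂]⟩
  refine ⟨fun g => lift π (0 : M ⟶ M) (fun g _ => h₁.1 g) (fun g _ => h₂.1 g) g comp_zero,
    lift _ π h₁.2.1 h₂.2.1, fun i hi => lift _ _ (h₁.2.2 i hi) (h₂.2.2 i hi)⟩

end HomExact

theorem IsLeftRes.homExact {𝒞 : Set A} {M : A} {P : CochainComplex A ℤ} {π : P.X 0 ⟶ M}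
    (hP : IsLeftRes 𝒞 M P π) {C : A} (hC : C ∈ 𝒞) : HomExact C P π :=
  hP.2.2.2 C hC

theorem exists_lift_family {X : ℤ → A} (D : ∀ k, X k ⟶ X (k + 1))
    (hD : ∀ k, D k ≫ D (k + 1) = 0) {P : CochainComplex A ℤ} {M : A} {π : P.X 0 ⟶ M}
    (hX : ∀ k ≤ 0, HomExact (X k) P π) (g : X 0 ⟶ M) (hg : D (-1) ≫ g = 0) :
    ∃ f : ∀ k, X k ⟶ P.X k, f 0 ≫ π = g ∧ ∀ k < 0, f k ≫ P.d k (k + 1) = D k ≫ f (k + 1) := by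
  obtain ⟨f₀, hf₀⟩ := (hX 0 le_rfl).exists_lift g
  obtain ⟨f, hf0, hf⟩ := exists_downward_seq (T := fun k => X k ⟶ P.X k) f₀
    (fun k t t' => t ≫ P.d k (k + 1) = D k ≫ t')
    ((hX (-1) (by norm_num)).exists_lift_of_comp_π_eq_zero (by norm_num) _
      (by rw [Category.assoc, hf₀, hg]))
    (fun k hk t' t'' ht' => (hX k (by omega)).exists_lift_of_comp_d_eq_zero rfl rfl (by omega) _
      (by rw [Category.assoc, ht', ← Category.assoc, hD, zero_comp]))
  exact ⟨f, hf0 ▸ hf₀, hf⟩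

namespace IsLeftRes

variable {𝒟 : Set A} {M M' : A} {P P' : CochainComplex A ℤ} {π : P.X 0 ⟶ M}

theorem exists_hom {π' : P'.X 0 ⟶ M'} (hP : IsLeftRes 𝒟 M P π) (hP' : IsLeftRes 𝒟 M' P' π')
    (f : M ⟶ M') : ∃ φ : P ⟶ P', φ.f 0 ≫ π' = π ≫ f := by
  obtain ⟨F, hF0, hF⟩ := exists_lift_family (fun k => P.d k (k + 1)) (fun k => P.d_comp_d _ _ _)
    (fun k hk => hP'.homExact (hP.2.1 k hk)) (π ≫ f) (by simpa using hP.2.2.1 =≫ f)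
  refine ⟨{ f := F, comm' := fun i j (hij : i + 1 = j) => ?_ }, hF0⟩
  subst hij
  rcases lt_or_ge i 0 with hi | hi
  · exact hF i hi
  · exact (hP'.1 (i + 1) (by omega)).eq_of_tgt _ _

theorem homotopy {π' : P'.X 0 ⟶ M'} (hP : IsLeftRes 𝒟 M P π) (hP' : IsLeftRes 𝒟 M' P' π')
    (F G : P ⟶ P') (hFG : F.f 0 ≫ π' = G.f 0 ≫ π') : Nonempty (Homotopy F G) := by
  have hX (k : ℤ) (hk : k ≤ 0) : HomExact (P.X k) P' π' := hP'.homExact (hP.2.1 k hk)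
  obtain ⟨κ, -, hκ⟩ := exists_downward_seq (T := fun k => P.X (k + 1) ⟶ P'.X k) 0
    (fun k t t' => F.f (k + 1) - G.f (k + 1) = P.d (k + 1) (k + 1 + 1) ≫ t' + t ≫ P'.d k (k + 1))
    (by
      obtain ⟨h, hh⟩ := (hX 0 le_rfl).exists_lift_of_comp_π_eq_zero (a := -1) (by norm_num)
        (F.f 0 - G.f 0) (by rw [Preadditive.sub_comp, hFG, sub_self])
      exact ⟨h, by simp [hh]⟩)
    (by
      intro k hk t' t'' ht'
      obtain ⟨h, hh⟩ := (hX (k + 1) (by omega)).exists_lift_of_comp_d_eq_zero rfl rfl (by omega)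
        (F.f (k + 1) - G.f (k + 1) - P.d (k + 1) (k + 1 + 1) ≫ t') (by
          have : t' ≫ P'.d (k + 1) (k + 1 + 1) = F.f (k + 1 + 1) - G.f (k + 1 + 1) -
              P.d (k + 1 + 1) (k + 1 + 1 + 1) ≫ t'' := by rw [ht']; abel
          simp [this])
      exact ⟨h, by rw [hh]; abel⟩)
  refine ⟨{ hom := fun i j => if h : j + 1 = i then (P.XIsoOfEq h.symm).hom ≫ κ j else 0
            zero := fun i j hij => dif_neg hij
            comm := fun i => ?_ }⟩
  obtain ⟨k, rfl⟩ : ∃ k, i = k + 1 := ⟨i - 1, by ring⟩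
  rw [dNext_eq _ (show (ComplexShape.up ℤ).Rel (k + 1) (k + 1 + 1) from rfl),
    prevD_eq _ (show (ComplexShape.up ℤ).Rel k (k + 1) from rfl)]
  simp only [dif_pos, HomologicalComplex.XIsoOfEq_rfl, Iso.refl_hom, Category.id_comp]
  rcases lt_or_ge k 0 with hk | hk
  · rw [← sub_eq_iff_eq_add, hκ k hk]
  · exact (hP.1 (k + 1) (by omega)).eq_of_src _ _

theorem exists_homotopyEquiv {π' : P'.X 0 ⟶ M} (hP : IsLeftRes 𝒟 M P π)
    (hP' : IsLeftRes 𝒟 M P' π') :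
    ∃ E : HomotopyEquiv P P', E.hom.f 0 ≫ π' = π ∧ E.inv.f 0 ≫ π = π' := by
  obtain ⟨u, hu⟩ := hP.exists_hom hP' (𝟙 M)
  obtain ⟨v, hv⟩ := hP'.exists_hom hP (𝟙 M)
  rw [Category.comp_id] at hu hv
  obtain ⟨huv⟩ := hP.homotopy hP (u ≫ v) (𝟙 P) (by simp [hu, hv])
  obtain ⟨hvu⟩ := hP'.homotopy hP' (v ≫ u) (𝟙 P') (by simp [hu, hv])
  exact ⟨⟨u, v, huv, hvu⟩, hu, hv⟩

end IsLeftRes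

/-- The terms of the horseshoe resolution are sums of objects of `𝒞`: they need not lie in `𝒞`,
but they are relatively projective in this sense. -/
def RelProjective (𝒞 : Set A) (X : A) : Prop :=
  ∀ ⦃M : A⦄ (P : CochainComplex A ℤ) (π : P.X 0 ⟶ M), (∀ C ∈ 𝒞, HomExact C P π) →
    HomExact X P π

namespace RelProjective

variable {𝒞 : Set A}

theorem of_mem {C : A} (hC : C ∈ 𝒞) : RelProjective 𝒞 C :=
  fun _ _ _ h => h C hC

theorem biprod {X₁ X₂ : A} (h₁ : RelProjective 𝒞 X₁) (h₂ : RelProjective 𝒞 X₂) :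
    RelProjective 𝒞 (X₁ ⊞ X₂) :=
  fun _ P π h => (h₁ P π h).biprod (h₂ P π h)

end RelProjective

namespace IsLeftRes

variable {𝒞 : Set A} {M : A} {P : CochainComplex A ℤ} {π : P.X 0 ⟶ M}

theorem relProjective (hP : IsLeftRes 𝒞 M P π) :
    IsLeftRes {X | RelProjective 𝒞 X} M P π :=
  ⟨hP.1, fun k hk => .of_mem (hP.2.1 k hk), hP.2.2.1,
    fun _ hX => hX P π fun _ hC => hP.homExact hC⟩

theorem epi (hadm : Admissible 𝒞) (hP : IsLeftRes 𝒞 M P π) : Epi π :=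
  hadm π ⟨hP.2.1 0 le_rfl, fun _ hC => (hP.homExact hC).exists_lift⟩

theorem exists_desc (hcf : ContravariantlyFinite 𝒞) (hadm : Admissible 𝒞)
    (hP : IsLeftRes 𝒞 M P π) {Z : A} (t : P.X 0 ⟶ Z) (ht : P.d (-1) 0 ≫ t = 0) :
    ∃ s : M ⟶ Z, π ≫ s = t := by
  have := hP.epi hadm
  obtain ⟨C, a, ha⟩ := hcf (kernel π)
  have := hadm a ha
  obtain ⟨h, hh⟩ := (hP.homExact ha.1).exists_lift_of_comp_π_eq_zero (a := -1) (by norm_num)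
    (a ≫ kernel.ι π) (by simp)
  have hι : kernel.ι π ≫ t = 0 := by
    rw [← cancel_epi a, ← Category.assoc, ← hh, Category.assoc, ht, comp_zero, comp_zero]
  exact ⟨Abelian.epiDesc π t hι, Abelian.comp_epiDesc π t hι⟩

end IsLeftRes

section ExtGrp

variable {P P' P'' : CochainComplex A ℤ} {Y : A} {n : ℤ}

theorem mem_extCocycles_iff {i : ℤ} (hi : i + 1 = -n) (g : P.X (-n) ⟶ Y) :
    g ∈ extCocycles P Y n ↔ P.d i (-n) ≫ g = 0 := by
  obtain rfl : i = -n - 1 := by omega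
  rfl

theorem mem_extBoundaries_iff {j : ℤ} (hj : -n + 1 = j) (g : P.X (-n) ⟶ Y) :
    g ∈ extBoundaries P Y n ↔ ∃ w : P.X j ⟶ Y, P.d (-n) j ≫ w = g := by
  subst hj
  rfl

theorem ExtGrp.mk_eq_zero_iff {j : ℤ} (hj : -n + 1 = j) (x : extCocycles P Y n) :
    (QuotientAddGroup.mk x : ExtGrp P Y n) = 0 ↔ ∃ w : P.X j ⟶ Y, P.d (-n) j ≫ w = x := by
  rw [QuotientAddGroup.eq_zero_iff, AddSubgroup.mem_addSubgroupOf, mem_extBoundaries_iff hj]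

theorem ExtGrp.mk_eq_mk_iff {j : ℤ} (hj : -n + 1 = j) (x y : extCocycles P Y n) :
    (QuotientAddGroup.mk x : ExtGrp P Y n) = QuotientAddGroup.mk y ↔
      ∃ w : P.X j ⟶ Y, P.d (-n) j ≫ w = x - y := by
  rw [← sub_eq_zero, ← QuotientAddGroup.mk_sub, ExtGrp.mk_eq_zero_iff hj]
  rfl

@[simp]
theorem coe_extCocyclesMap (φ : P ⟶ P') (x : extCocycles P' Y n) :
    (extCocyclesMap φ Y n x : P.X (-n) ⟶ Y) = φ.f (-n) ≫ x :=
  rfl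

theorem extMap_comp (φ : P ⟶ P') (ψ : P' ⟶ P'') :
    extMap (φ ≫ ψ) Y n = (extMap φ Y n).comp (extMap ψ Y n) :=
  QuotientAddGroup.addMonoidHom_ext _ <| AddMonoidHom.ext fun x =>
    congrArg QuotientAddGroup.mk <| Subtype.ext <| by simp

theorem extMap_id : extMap (𝟙 P) Y n = AddMonoidHom.id _ :=
  QuotientAddGroup.addMonoidHom_ext _ <| AddMonoidHom.ext fun x =>
    congrArg QuotientAddGroup.mk <| Subtype.ext <| by simp

theorem extMap_zero : extMap (0 : P ⟶ P') Y n = 0 :=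
  QuotientAddGroup.addMonoidHom_ext _ <| AddMonoidHom.ext fun x =>
    congrArg QuotientAddGroup.mk <| Subtype.ext <| by simp

theorem Homotopy.extMap_eq {φ ψ : P ⟶ P'} (h : Homotopy φ ψ) :
    extMap φ Y n = extMap ψ Y n := by
  refine QuotientAddGroup.addMonoidHom_ext _ (AddMonoidHom.ext fun x => ?_)
  change (QuotientAddGroup.mk (extCocyclesMap φ Y n x) : ExtGrp P Y n) =
    QuotientAddGroup.mk (extCocyclesMap ψ Y n x)
  rw [ExtGrp.mk_eq_mk_iff rfl]
  refine ⟨h.hom (-n + 1) (-n) ≫ x, ?_⟩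
  have hx : P'.d (-n - 1) (-n) ≫ (x : P'.X (-n) ⟶ Y) = 0 := x.2
  rw [coe_extCocyclesMap, coe_extCocyclesMap, h.comm (-n),
    dNext_eq _ (show (ComplexShape.up ℤ).Rel (-n) (-n + 1) from rfl),
    prevD_eq _ (show (ComplexShape.up ℤ).Rel (-n - 1) (-n) by simp)]
  simp [hx]

theorem HomotopyEquiv.extMap_hom_comp_inv (E : HomotopyEquiv P P') :
    (extMap E.hom Y n).comp (extMap E.inv Y n) = AddMonoidHom.id _ := by
  rw [← extMap_comp, E.homotopyHomInvId.extMap_eq, extMap_id]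

theorem HomotopyEquiv.extMap_inv_comp_hom (E : HomotopyEquiv P P') :
    (extMap E.inv Y n).comp (extMap E.hom Y n) = AddMonoidHom.id _ := by
  rw [← extMap_comp, E.homotopyInvHomId.extMap_eq, extMap_id]

theorem HomotopyEquiv.bijective_extMap_hom (E : HomotopyEquiv P P') :
    Function.Bijective (extMap E.hom Y n) :=
  Function.bijective_iff_has_inverse.2 ⟨_, DFunLike.congr_fun E.extMap_inv_comp_hom,
    DFunLike.congr_fun E.extMap_hom_comp_inv⟩

end ExtGrp

section TwistedSum

variable (K N : CochainComplex A ℤ) (Θ : ∀ a b, N.X a ⟶ K.X b)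
  (hΘ₀ : ∀ a b, ¬ (ComplexShape.up ℤ).Rel a b → Θ a b = 0)
  (hΘ : ∀ a b c, Θ a b ≫ K.d b c + N.d a b ≫ Θ b c = 0)

@[simps]
noncomputable abbrev twistedSum : CochainComplex A ℤ where
  X k := K.X k ⊞ N.X k
  d a b := biprod.map (K.d a b) (N.d a b) + biprod.snd ≫ Θ a b ≫ biprod.inl
  shape a b h := by ext <;> simp [K.shape a b h, N.shape a b h, hΘ₀ a b h]
  d_comp_d' a b c _ _ := by ext <;> simp [hΘ a b c]

@[simps]
noncomputable def twistedSum.inl : K ⟶ twistedSum K N Θ hΘ₀ hΘ where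
  f _ := biprod.inl
  comm' _ _ _ := by apply biprod.hom_ext <;> simp

@[simps]
noncomputable def twistedSum.snd : twistedSum K N Θ hΘ₀ hΘ ⟶ N where
  f _ := biprod.snd
  comm' _ _ _ := by apply biprod.hom_ext' <;> simp

@[simp]
theorem twistedSum.inl_comp_snd :
    twistedSum.inl K N Θ hΘ₀ hΘ ≫ twistedSum.snd K N Θ hΘ₀ hΘ = 0 := by
  ext; simp

end TwistedSum

theorem d_comp_Θ_comp {K N : CochainComplex A ℤ} {Θ : ∀ a b, N.X a ⟶ K.X b}
    (hΘ : ∀ a b c, Θ a b ≫ K.d b c + N.d a b ≫ Θ b c = 0) (a b c : ℤ) {Z : A} (h : K.X c ⟶ Z) :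
    N.d a b ≫ Θ b c ≫ h = -(Θ a b ≫ K.d b c ≫ h) := by
  rw [← Category.assoc, eq_neg_of_add_eq_zero_right (hΘ a b c)]
  simp

section Connecting

variable {K N : CochainComplex A ℤ} {Θ : ∀ a b, N.X a ⟶ K.X b}
  (hΘ : ∀ a b c, Θ a b ≫ K.d b c + N.d a b ≫ Θ b c = 0) (Y : A) (n : ℤ)

noncomputable def extConnectingCocycles : extCocycles K Y n →+ extCocycles N Y (n + 1) :=
  AddMonoidHom.mk' (fun g => ⟨Θ (-(n + 1)) (-n) ≫ g.1, by
      rw [mem_extCocycles_iff (i := -(n + 1) - 1) (by ring), ← Category.assoc,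
        eq_neg_of_add_eq_zero_right (hΘ _ _ _), Preadditive.neg_comp, Category.assoc,
        (mem_extCocycles_iff (by ring) _).1 g.2, comp_zero, neg_zero]⟩)
    fun _ _ => Subtype.ext (Preadditive.comp_add _ _ _ _ _ _)

@[simp]
theorem coe_extConnectingCocycles (g : extCocycles K Y n) :
    (extConnectingCocycles hΘ Y n g : N.X (-(n + 1)) ⟶ Y) = Θ (-(n + 1)) (-n) ≫ g :=
  rfl

noncomputable def extConnecting : ExtGrp K Y n →+ ExtGrp N Y (n + 1) :=
  QuotientAddGroup.map _ _ (extConnectingCocycles hΘ Y n) (by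
    intro g hg
    rw [AddSubgroup.mem_addSubgroupOf, mem_extBoundaries_iff rfl] at hg
    obtain ⟨w, hw⟩ := hg
    rw [AddSubgroup.mem_comap, AddSubgroup.mem_addSubgroupOf,
      mem_extBoundaries_iff (j := -n) (by ring)]
    refine ⟨-(Θ (-n) (-n + 1) ≫ w), ?_⟩
    simp [← hw, ← Category.assoc, eq_neg_of_add_eq_zero_right (hΘ (-(n + 1)) (-n) (-n + 1))])

end Connecting

namespace twistedSum

variable {K N : CochainComplex A ℤ} {Θ : ∀ a b, N.X a ⟶ K.X b}
  {hΘ₀ : ∀ a b, ¬ (ComplexShape.up ℤ).Rel a b → Θ a b = 0}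
  {hΘ : ∀ a b c, Θ a b ≫ K.d b c + N.d a b ≫ Θ b c = 0} (Y : A) (n : ℤ)

theorem exact_extMap_snd_inl :
    Function.Exact (extMap (snd K N Θ hΘ₀ hΘ) Y n) (extMap (inl K N Θ hΘ₀ hΘ) Y n) := by
  refine AddMonoidHom.exact_of_comp_of_mem_range ?_ fun z hz => ?_
  · rw [← extMap_comp, inl_comp_snd, extMap_zero]
  induction z using QuotientAddGroup.induction_on with | H z => ?_
  obtain ⟨w, hw⟩ := (ExtGrp.mk_eq_zero_iff rfl _).1 hz
  rw [coe_extCocyclesMap, inl_f] at hw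
  set d := (twistedSum K N Θ hΘ₀ hΘ).d
  set z' : K.X (-n) ⊞ N.X (-n) ⟶ Y := z.1 - d (-n) (-n + 1) ≫ biprod.fst ≫ w
  have hz : d (-n - 1) (-n) ≫ z.1 = 0 := z.2
  have hz'inl : biprod.inl ≫ z' = 0 := by simp [z', d, hw]
  have hz'coc : d (-n - 1) (-n) ≫ z' = 0 := by simp [z', d, hz, d_comp_Θ_comp hΘ]
  have hy : N.d (-n - 1) (-n) ≫ biprod.inr ≫ z' = 0 := by
    simpa [d, hz'inl] using biprod.inr ≫= hz'coc
  refine ⟨QuotientAddGroup.mk ⟨biprod.inr ≫ z', hy⟩, (ExtGrp.mk_eq_mk_iff rfl _ _).2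
    ⟨-(biprod.fst ≫ w), ?_⟩⟩
  have hz' : biprod.snd ≫ biprod.inr ≫ z' = z' := by
    apply biprod.hom_ext' <;> simp [hz'inl]
  rw [coe_extCocyclesMap, snd_f, hz']
  simp [z', d]

theorem extConnecting_comp_extMap_inl :
    (extConnecting hΘ Y n).comp (extMap (inl K N Θ hΘ₀ hΘ) Y n) = 0 := by
  refine QuotientAddGroup.addMonoidHom_ext _ (AddMonoidHom.ext fun z => ?_)
  refine (ExtGrp.mk_eq_zero_iff (j := -n) (by ring) _).2 ⟨-(biprod.inr ≫ z.1), ?_⟩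
  have hz : (twistedSum K N Θ hΘ₀ hΘ).d (-(n + 1)) (-n) ≫ z.1 = 0 :=
    (mem_extCocycles_iff (by ring) _).1 z.2
  have h := biprod.inr ≫= hz
  simp only [Preadditive.add_comp, Preadditive.comp_add, biprod.inr_map_assoc,
    biprod.inr_snd_assoc, Category.assoc, comp_zero] at h
  rw [coe_extConnectingCocycles, coe_extCocyclesMap, inl_f, eq_neg_of_add_eq_zero_right h]
  simp

theorem exact_extMap_inl_extConnecting :
    Function.Exact (extMap (inl K N Θ hΘ₀ hΘ) Y n) (extConnecting hΘ Y n) := by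
  refine AddMonoidHom.exact_of_comp_of_mem_range (extConnecting_comp_extMap_inl Y n)
    fun g hg => ?_
  induction g using QuotientAddGroup.induction_on with | H g => ?_
  obtain ⟨w, hw⟩ := (ExtGrp.mk_eq_zero_iff (j := -n) (by ring) _).1 hg
  rw [coe_extConnectingCocycles] at hw
  have hg : K.d (-(n + 1)) (-n) ≫ g.1 = 0 := (mem_extCocycles_iff (by ring) _).1 g.2
  have hz : (twistedSum K N Θ hΘ₀ hΘ).d (-(n + 1)) (-n) ≫ (biprod.fst ≫ g.1 - biprod.snd ≫ w) =
      0 := by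
    apply biprod.hom_ext' <;> simp [hg, hw]
  refine ⟨QuotientAddGroup.mk ⟨_, (mem_extCocycles_iff (by ring) _).2 hz⟩,
    congrArg QuotientAddGroup.mk (Subtype.ext ?_)⟩
  rw [coe_extCocyclesMap, inl_f]
  simp

theorem extMap_snd_comp_extConnecting :
    (extMap (snd K N Θ hΘ₀ hΘ) Y (n + 1)).comp (extConnecting hΘ Y n) = 0 := by
  refine QuotientAddGroup.addMonoidHom_ext _ (AddMonoidHom.ext fun g => ?_)
  refine (ExtGrp.mk_eq_zero_iff (j := -n) (by ring) _).2 ⟨biprod.fst ≫ g.1, ?_⟩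
  have hg : K.d (-(n + 1)) (-n) ≫ g.1 = 0 := (mem_extCocycles_iff (by ring) _).1 g.2
  rw [coe_extCocyclesMap, coe_extConnectingCocycles, snd_f]
  simp [hg]

theorem exact_extConnecting_extMap_snd :
    Function.Exact (extConnecting hΘ Y n) (extMap (snd K N Θ hΘ₀ hΘ) Y (n + 1)) := by
  refine AddMonoidHom.exact_of_comp_of_mem_range (extMap_snd_comp_extConnecting Y n)
    fun x hx => ?_
  induction x using QuotientAddGroup.induction_on with | H x => ?_
  obtain ⟨W, hW⟩ := (ExtGrp.mk_eq_zero_iff (j := -n) (by ring) _).1 hx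
  rw [coe_extCocyclesMap, snd_f] at hW
  have hg : K.d (-(n + 1)) (-n) ≫ biprod.inl ≫ W = 0 := by
    simpa using biprod.inl ≫= hW
  have hx : (x : N.X (-(n + 1)) ⟶ Y) = Θ (-(n + 1)) (-n) ≫ biprod.inl ≫ W +
      N.d (-(n + 1)) (-n) ≫ biprod.inr ≫ W := by
    simpa [add_comm] using (biprod.inr ≫= hW).symm
  refine ⟨QuotientAddGroup.mk ⟨_, (mem_extCocycles_iff (by ring) _).2 hg⟩,
    (ExtGrp.mk_eq_mk_iff (j := -n) (by ring) _ _).2 ⟨-(biprod.inr ≫ W), ?_⟩⟩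
  rw [coe_extConnectingCocycles, hx]
  simp

end twistedSum

namespace twistedSum

variable {K N P : CochainComplex A ℤ} {Θ : ∀ a b, N.X a ⟶ K.X b}
  {hΘ₀ : ∀ a b, ¬ (ComplexShape.up ℤ).Rel a b → Θ a b = 0}
  {hΘ : ∀ a b c, Θ a b ≫ K.d b c + N.d a b ≫ Θ b c = 0}
  (E : HomotopyEquiv P (twistedSum K N Θ hΘ₀ hΘ)) (Y : A) (n : ℤ)

theorem extMap_inl_comp_inv_comp_extMap_hom :
    (extMap (inl K N Θ hΘ₀ hΘ ≫ E.inv) Y n).comp (extMap E.hom Y n) =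
      extMap (inl _ _ _ _ _) Y n := by
  rw [extMap_comp, AddMonoidHom.comp_assoc, E.extMap_inv_comp_hom, AddMonoidHom.comp_id]

theorem exact_extMap_hom_comp_snd_inl_comp_inv :
    Function.Exact (extMap (E.hom ≫ snd K N Θ hΘ₀ hΘ) Y n) (extMap (inl _ _ _ _ _ ≫ E.inv) Y n) :=
  (AddMonoidHom.exact_iff_of_surjective_of_bijective_of_injective _ _ _ _
    (AddMonoidHom.id _) (extMap E.hom Y n) (AddMonoidHom.id _)
    (by rw [extMap_comp, AddMonoidHom.comp_id])
    (by rw [extMap_inl_comp_inv_comp_extMap_hom, AddMonoidHom.id_comp])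
    Function.surjective_id E.bijective_extMap_hom Function.injective_id).1
    (exact_extMap_snd_inl Y n)

theorem exact_extMap_inl_comp_inv_extConnecting :
    Function.Exact (extMap (inl K N Θ hΘ₀ hΘ ≫ E.inv) Y n) (extConnecting hΘ Y n) :=
  (AddMonoidHom.exact_iff_of_surjective_of_bijective_of_injective _ (extConnecting hΘ Y n) _
    (extConnecting hΘ Y n) (extMap E.hom Y n) (AddMonoidHom.id _) (AddMonoidHom.id _)
    (by rw [extMap_inl_comp_inv_comp_extMap_hom, AddMonoidHom.id_comp]) rfl
    E.bijective_extMap_hom.2 Function.bijective_id Function.injective_id).1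
    (exact_extMap_inl_extConnecting Y n)

theorem exact_extConnecting_extMap_hom_comp_snd :
    Function.Exact (extConnecting hΘ Y n) (extMap (E.hom ≫ snd K N Θ hΘ₀ hΘ) Y (n + 1)) :=
  (AddMonoidHom.exact_iff_of_surjective_of_bijective_of_injective (extConnecting hΘ Y n)
    (extMap (snd _ _ _ _ _) Y (n + 1)) (extConnecting hΘ Y n) _
    (AddMonoidHom.id _) (AddMonoidHom.id _) (extMap E.hom Y (n + 1)) rfl
    (by rw [extMap_comp, AddMonoidHom.comp_id])
    Function.surjective_id Function.bijective_id E.bijective_extMap_hom.1).1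
    (exact_extConnecting_extMap_snd Y n)

end twistedSum

section ExtZero

variable {P P' : CochainComplex A ℤ} {M M' : A} (π : P.X 0 ⟶ M) (hπ : P.d (-1) 0 ≫ π = 0)
  (Y : A)

noncomputable def toExtZero : (M ⟶ Y) →+ ExtGrp P Y 0 :=
  (QuotientAddGroup.mk' _).comp <| (preComp Y π).codRestrict (extCocycles P Y 0) fun g => by
    rw [mem_extCocycles_iff (i := -1) (by norm_num)]
    simp [reassoc_of% hπ]

variable {π} {π' : P'.X 0 ⟶ M'} {hπ} {hπ' : P'.d (-1) 0 ≫ π' = 0} {Y}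

theorem extMap_comp_toExtZero (φ : P ⟶ P') (f : M ⟶ M') (hφ : φ.f 0 ≫ π' = π ≫ f) :
    (extMap φ Y 0).comp (toExtZero π' hπ' Y) = (toExtZero π hπ Y).comp (preComp Y f) :=
  AddMonoidHom.ext fun g => congrArg QuotientAddGroup.mk <| Subtype.ext <|
    show φ.f 0 ≫ π' ≫ g = π ≫ f ≫ g by rw [reassoc_of% hφ]

theorem IsLeftRes.bijective_toExtZero {𝒞 : Set A} (hcf : ContravariantlyFinite 𝒞)
    (hadm : Admissible 𝒞) (hP : IsLeftRes 𝒞 M P π) :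
    Function.Bijective (toExtZero π hP.2.2.1 Y) := by
  have := hP.epi hadm
  refine ⟨(injective_iff_map_eq_zero _).2 fun g hg => ?_, fun x => ?_⟩
  · obtain ⟨w, hw⟩ := (ExtGrp.mk_eq_zero_iff (j := 1) (by norm_num) _).1 hg
    rw [← cancel_epi π, comp_zero]
    exact hw.symm.trans (by rw [(hP.1 1 one_pos).eq_of_src w 0, comp_zero])
  · induction x using QuotientAddGroup.induction_on with | H z => ?_
    obtain ⟨s, hs⟩ := hP.exists_desc hcf hadm z.1 z.2
    exact ⟨s, congrArg QuotientAddGroup.mk (Subtype.ext hs)⟩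

end ExtZero

theorem exact_preComp_comp_toExtZero {P P' : CochainComplex A ℤ} {M M' : A} {π : P.X 0 ⟶ M}
    {π' : P'.X 0 ⟶ M'} {hπ : P.d (-1) 0 ≫ π = 0} {hπ' : P'.d (-1) 0 ≫ π' = 0} {Y : A}
    {G : Type*} [AddCommGroup G] {δ : ExtGrp P Y 0 →+ G} (φ : P ⟶ P') (f : M ⟶ M')
    (hφ : φ.f 0 ≫ π' = π ≫ f) (h : Function.Exact (extMap φ Y 0) δ)
    (hπ's : Function.Surjective (toExtZero π' hπ' Y))
    (hπb : Function.Bijective (toExtZero π hπ Y)) :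
    Function.Exact (preComp Y f) (δ.comp (toExtZero π hπ Y)) :=
  (AddMonoidHom.exact_iff_of_surjective_of_bijective_of_injective (preComp Y f)
    (δ.comp (toExtZero π hπ Y)) (extMap φ Y 0) δ _ _ (AddMonoidHom.id G)
    (extMap_comp_toExtZero φ f hφ) rfl hπ's hπb Function.injective_id).2 h

theorem exact_comp_of_surjective {G₁ G₂ G₃ G₄ : Type*} [AddCommGroup G₁] [AddCommGroup G₂]
    [AddCommGroup G₃] [AddCommGroup G₄] {e : G₁ →+ G₂} {f : G₂ →+ G₃} {g : G₃ →+ G₄}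
    (h : Function.Exact f g) (he : Function.Surjective e) : Function.Exact (f.comp e) g :=
  (AddMonoidHom.exact_iff_of_surjective_of_bijective_of_injective (f.comp e) g f g e (.id _)
    (AddMonoidHom.id _) rfl rfl he Function.bijective_id Function.injective_id).2 h

theorem exact_preComp_of_exact {L M N : A} {i : L ⟶ M} {p : M ⟶ N} {hw : i ≫ p = 0}
    (hex : (ShortComplex.mk i p hw).Exact) [Epi p] (Y : A) :
    Function.Exact (preComp Y p) (preComp Y i) := fun h =>
  ⟨fun h0 => ⟨hex.desc h h0, hex.g_desc h h0⟩, by rintro ⟨g, rfl⟩; simp [reassoc_of% hw]⟩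

section Horseshoe

variable {𝒞 : Set A} {L M N : A} {i : L ⟶ M} {p : M ⟶ N} {hw : i ≫ p = 0}
  {PL PN : CochainComplex A ℤ} {πL : PL.X 0 ⟶ L} {πN : PN.X 0 ⟶ N} {σ : PN.X 0 ⟶ M}

/-- `Θ` is a chain map from `PN` shifted by one (with differential `-d`) to `PL`, lifting the map
`PN⁻¹ ⟶ L` through which `-d ≫ σ` factors. -/
theorem exists_horseshoe_twisting (hmono : Mono i) (hex : (ShortComplex.mk i p hw).Exact)
    (hL : IsLeftRes 𝒞 L PL πL) (hN : IsLeftRes 𝒞 N PN πN) (hσ : σ ≫ p = πN) :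
    ∃ Θ : ∀ a b, PN.X a ⟶ PL.X b, (∀ a b, ¬ (ComplexShape.up ℤ).Rel a b → Θ a b = 0) ∧
      (∀ a b c, Θ a b ≫ PL.d b c + PN.d a b ≫ Θ b c = 0) ∧
      Θ (-1) 0 ≫ πL ≫ i + PN.d (-1) 0 ≫ σ = 0 := by
  have : Mono (ShortComplex.mk i p hw).f := hmono
  have hgp : (-(PN.d (-1) 0 ≫ σ)) ≫ p = 0 := by simp [hσ, hN.2.2.1]
  let g : PN.X (-1) ⟶ L := hex.lift _ hgp
  have hg : g ≫ i = -(PN.d (-1) 0 ≫ σ) := hex.lift_f _ hgp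
  obtain ⟨f, hf0, hf⟩ := exists_lift_family (X := fun k => PN.X (k - 1))
    (fun k => -PN.d (k - 1) (k + 1 - 1)) (fun k => by simp)
    (fun k hk => hL.homExact (hN.2.1 (k - 1) (by omega))) g (by
      rw [← cancel_mono i]
      simp [hg])
  have hf' (k : ℤ) : f k ≫ PL.d k (k + 1) = -(PN.d (k - 1) (k + 1 - 1) ≫ f (k + 1)) := by
    rcases lt_or_ge k 0 with hk | hk
    · rw [hf k hk, Preadditive.neg_comp]
    · exact (hL.1 (k + 1) (by omega)).eq_of_tgt _ _
  refine ⟨fun a b => if h : a + 1 = b then (PN.XIsoOfEq (by omega : a = b - 1)).hom ≫ f b else 0,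
    fun a b h => dif_neg h, fun a b c => ?_, ?_⟩
  · by_cases hab : a + 1 = b
    · by_cases hbc : b + 1 = c
      · subst hab hbc
        simp [hf']
      · simp [hbc]
    · simp [hab]
  · have hiso : (PN.XIsoOfEq (show (-1 : ℤ) = 0 - 1 by norm_num)).hom = 𝟙 _ := rfl
    dsimp only
    rw [dif_pos (by norm_num), hiso, Category.id_comp, reassoc_of% hf0, hg, neg_add_cancel]

variable {Θ : ∀ a b, PN.X a ⟶ PL.X b} {hΘ₀ : ∀ a b, ¬ (ComplexShape.up ℤ).Rel a b → Θ a b = 0}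
  {hΘ : ∀ a b c, Θ a b ≫ PL.d b c + PN.d a b ≫ Θ b c = 0} {C : A}

theorem twistedSum.exists_lift (hex : (ShortComplex.mk i p hw).Exact) (hmono : Mono i)
    (hCL : HomExact C PL πL) (hCN : HomExact C PN πN) (hσ : σ ≫ p = πN) (g : C ⟶ M) :
    ∃ h : C ⟶ (twistedSum PL PN Θ hΘ₀ hΘ).X 0, h ≫ biprod.desc (πL ≫ i) σ = g := by
  have : Mono (ShortComplex.mk i p hw).f := hmono
  obtain ⟨gN, hgN⟩ := hCN.exists_lift (g ≫ p)
  have hp : (g - gN ≫ σ) ≫ p = 0 := by simp [hσ, hgN]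
  obtain ⟨gL, hgL⟩ := hCL.exists_lift (hex.lift _ hp)
  refine ⟨biprod.lift gL gN, ?_⟩
  rw [biprod.lift_desc, reassoc_of% hgL]
  simp [hex.lift_f _ hp]

theorem twistedSum.exists_lift_of_comp_desc_eq_zero (hw : i ≫ p = 0) (hmono : Mono i)
    (hCL : HomExact C PL πL) (hCN : HomExact C PN πN) (hσ : σ ≫ p = πN)
    (hΘσ : Θ (-1) 0 ≫ πL ≫ i + PN.d (-1) 0 ≫ σ = 0)
    (g : C ⟶ (twistedSum PL PN Θ hΘ₀ hΘ).X 0) (hg : g ≫ biprod.desc (πL ≫ i) σ = 0) :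
    ∃ h : C ⟶ (twistedSum PL PN Θ hΘ₀ hΘ).X (-1),
      h ≫ (twistedSum PL PN Θ hΘ₀ hΘ).d (-1) 0 = g := by
  obtain ⟨gL, gN, rfl⟩ : ∃ gL gN, g = biprod.lift gL gN :=
    ⟨g ≫ biprod.fst, g ≫ biprod.snd, by ext <;> simp⟩
  rw [biprod.lift_desc] at hg
  have hgN : gN ≫ πN = 0 := by simpa [hσ, hw] using hg =≫ p
  obtain ⟨hN, rfl⟩ := hCN.exists_lift_of_comp_π_eq_zero (a := -1) (by norm_num) gN hgN
  have hgL : (gL - hN ≫ Θ (-1) 0) ≫ πL = 0 := by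
    rw [← cancel_mono i]
    simp only [Preadditive.sub_comp, Category.assoc, zero_comp]
    rw [eq_neg_of_add_eq_zero_left hΘσ]
    simpa [sub_eq_add_neg] using hg
  obtain ⟨hL, hhL⟩ := hCL.exists_lift_of_comp_π_eq_zero (a := -1) (by norm_num) _ hgL
  refine ⟨biprod.lift hL hN, ?_⟩
  apply biprod.hom_ext
  · simp only [Int.reduceNeg, twistedSum_X, Preadditive.comp_add, biprod.lift_snd_assoc,
      Preadditive.add_comp, Category.assoc, biprod.map_fst, biprod.lift_fst_assoc,
      BinaryBicone.inl_fst, Category.comp_id, biprod.lift_fst]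
    rw [hhL, sub_add_cancel]
  · simp

theorem twistedSum.exists_lift_of_comp_d_eq_zero (hCL : HomExact C PL πL)
    (hCN : HomExact C PN πN) {k : ℤ} (hk : k < 0)
    (g : C ⟶ (twistedSum PL PN Θ hΘ₀ hΘ).X k)
    (hg : g ≫ (twistedSum PL PN Θ hΘ₀ hΘ).d k (k + 1) = 0) :
    ∃ h : C ⟶ (twistedSum PL PN Θ hΘ₀ hΘ).X (k - 1),
      h ≫ (twistedSum PL PN Θ hΘ₀ hΘ).d (k - 1) k = g := by
  obtain ⟨gL, gN, rfl⟩ : ∃ gL gN, g = biprod.lift gL gN :=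
    ⟨g ≫ biprod.fst, g ≫ biprod.snd, by ext <;> simp⟩
  have hgL : gL ≫ PL.d k (k + 1) + gN ≫ Θ k (k + 1) = 0 := by simpa using hg =≫ biprod.fst
  have hgN : gN ≫ PN.d k (k + 1) = 0 := by simpa using hg =≫ biprod.snd
  obtain ⟨hN, rfl⟩ := hCN.exists_lift_of_comp_d_eq_zero (sub_add_cancel k 1) rfl hk gN hgN
  have hgL' : (gL - hN ≫ Θ (k - 1) k) ≫ PL.d k (k + 1) = 0 := by
    rw [Preadditive.sub_comp, Category.assoc, eq_neg_of_add_eq_zero_left (hΘ _ _ _)]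
    simpa using hgL
  obtain ⟨hL, hhL⟩ := hCL.exists_lift_of_comp_d_eq_zero (sub_add_cancel k 1) rfl hk _ hgL'
  refine ⟨biprod.lift hL hN, ?_⟩
  apply biprod.hom_ext
  · simp only [twistedSum_X, Preadditive.comp_add, biprod.lift_snd_assoc, Preadditive.add_comp,
      Category.assoc, biprod.map_fst, biprod.lift_fst_assoc, BinaryBicone.inl_fst,
      Category.comp_id, biprod.lift_fst]
    rw [hhL, sub_add_cancel]
  · simp

theorem twistedSum.isLeftRes (hmono : Mono i) (hex : (ShortComplex.mk i p hw).Exact)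
    (hL : IsLeftRes 𝒞 L PL πL) (hN : IsLeftRes 𝒞 N PN πN) (hσ : σ ≫ p = πN)
    (hΘσ : Θ (-1) 0 ≫ πL ≫ i + PN.d (-1) 0 ≫ σ = 0) :
    IsLeftRes {X | RelProjective 𝒞 X} M (twistedSum PL PN Θ hΘ₀ hΘ)
      (biprod.desc (πL ≫ i) σ) := by
  refine ⟨fun k hk => (biprod_isZero_iff _ _).2 ⟨hL.1 k hk, hN.1 k hk⟩,
    fun k hk => (RelProjective.of_mem (hL.2.1 k hk)).biprod (.of_mem (hN.2.1 k hk)),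
    by apply biprod.hom_ext' <;> simp [reassoc_of% hL.2.2.1, add_comm, hΘσ],
    fun X hX => hX _ _ fun C hC => ?_⟩
  have hCL := hL.homExact hC
  have hCN := hN.homExact hC
  exact ⟨twistedSum.exists_lift hex hmono hCL hCN hσ,
    twistedSum.exists_lift_of_comp_desc_eq_zero hw hmono hCL hCN hσ hΘσ,
    fun k hk => twistedSum.exists_lift_of_comp_d_eq_zero hCL hCN hk⟩

end Horseshoe

theorem stmt13 (𝒞 : Set A) (hcf : ContravariantlyFinite 𝒞) (hadm : Admissible 𝒞)
    {L M N : A} (i : L ⟶ M) (p : M ⟶ N) (hw : i ≫ p = 0)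
    (hmono : Mono i) (hepi : Epi p) (hex : (ShortComplex.mk i p hw).Exact)
    (hCex : ∀ C ∈ 𝒞, ∀ g : C ⟶ N, ∃ h : C ⟶ M, h ≫ p = g)
    (PL : CochainComplex A ℤ) (πL : PL.X 0 ⟶ L) (hL : IsLeftRes 𝒞 L PL πL)
    (PM : CochainComplex A ℤ) (πM : PM.X 0 ⟶ M) (hM : IsLeftRes 𝒞 M PM πM)
    (PN : CochainComplex A ℤ) (πN : PN.X 0 ⟶ N) (hN : IsLeftRes 𝒞 N PN πN)
    (Y : A) :
    ∃ (φ : PM ⟶ PN) (ψ : PL ⟶ PM),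
      φ.f 0 ≫ πN = πM ≫ p ∧ ψ.f 0 ≫ πM = πL ≫ i ∧
      ∃ (δ0 : (L ⟶ Y) →+ ExtGrp PN Y 1)
        (δ : ∀ n : ℤ, 1 ≤ n → (ExtGrp PL Y n →+ ExtGrp PN Y (n + 1))),
        Function.Injective (fun g : N ⟶ Y => p ≫ g) ∧
        Function.Exact (fun g : N ⟶ Y => p ≫ g) (fun h : M ⟶ Y => i ≫ h) ∧
        Function.Exact (fun h : M ⟶ Y => i ≫ h) ⇑δ0 ∧
        Function.Exact ⇑δ0 ⇑(extMap φ Y 1) ∧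
        (∀ n : ℤ, 1 ≤ n → Function.Exact ⇑(extMap φ Y n) ⇑(extMap ψ Y n)) ∧
        (∀ (n : ℤ) (hn : 1 ≤ n), Function.Exact ⇑(extMap ψ Y n) ⇑(δ n hn)) ∧
        (∀ (n : ℤ) (hn : 1 ≤ n), Function.Exact ⇑(δ n hn) ⇑(extMap φ Y (n + 1))) := by
  obtain ⟨σ, hσ⟩ := hCex _ (hN.2.1 0 le_rfl) πN
  obtain ⟨Θ, hΘ₀, hΘ, hΘσ⟩ := exists_horseshoe_twisting hmono hex hL hN hσ
  obtain ⟨E, hE, hE'⟩ := hM.relProjective.exists_homotopyEquiv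
    (twistedSum.isLeftRes (hΘ₀ := hΘ₀) (hΘ := hΘ) hmono hex hL hN hσ hΘσ)
  have hφ : (E.hom ≫ twistedSum.snd PL PN Θ hΘ₀ hΘ).f 0 ≫ πN = πM ≫ p := by
    have : biprod.desc (πL ≫ i) σ ≫ p = biprod.snd ≫ πN := by
      apply biprod.hom_ext' <;> simp [hw, hσ]
    simp [← hE, this]
  have hψ : (twistedSum.inl PL PN Θ hΘ₀ hΘ ≫ E.inv).f 0 ≫ πM = πL ≫ i := by simp [hE']
  have hLb := hL.bijective_toExtZero hcf hadm (Y := Y)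
  refine ⟨_, _, hφ, hψ, (extConnecting hΘ Y 0).comp (toExtZero πL hL.2.2.1 Y),
    fun n _ => extConnecting hΘ Y n, fun g g' h => (cancel_epi p).1 h,
    exact_preComp_of_exact hex Y,
    exact_preComp_comp_toExtZero _ i hψ (twistedSum.exact_extMap_inl_comp_inv_extConnecting E Y 0)
      (hM.bijective_toExtZero hcf hadm).2 hLb,
    exact_comp_of_surjective (twistedSum.exact_extConnecting_extMap_hom_comp_snd E Y 0) hLb.2,
    fun n _ => twistedSum.exact_extMap_hom_comp_snd_inl_comp_inv E Y n,
    fun n _ => twistedSum.exact_extMap_inl_comp_inv_extConnecting E Y n,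
    fun n _ => twistedSum.exact_extConnecting_extMap_hom_comp_snd E Y n⟩
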